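/- arXiv:2101.01127 — 2 statements merged into one kernel-verified Lean document; each statement's English description precedes it below -/
import Mathlib

section
/- Let v ∈ (L^1 + L^∞)(ℝ, ℝ) and let ψ, φ ∈ H^1(ℝ, ℝ) be two real eigenfunctions of the one-dimensional Schrödinger operator -d²/dx² + v with the same eigenvalue E, i.e. -ψ'' + vψ = Eψ and -φ'' + vφ = Eφ. Then ψ and φ are linearly dependent: there exists a ∈ ℝ with ψ = a·φ. -/
/-!
The Wronskian `W = ψ φ' - ψ' φ` of two solutions of `u'' = (v - E) u` is constant; as a product
of `L²` functions it is integrable on `ℝ`, hence `W = 0`. At a point `x₀` with `φ x₀ ≠ 0` the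
function `u = ψ - (ψ x₀ / φ x₀) φ` then has vanishing Cauchy data, so `u = 0` by uniqueness for
the linear ODE `u'' = q u`. Uniqueness needs only local integrability of `q`: the energy
`F = u² + u'²` satisfies `|F'| ≤ |1 + q| F`, and on an interval around a zero of `F` on which
`∫ |1 + q| ≤ 1/2` the maximum `M` of `F` obeys `M ≤ M / 2`, so the zero set of `F` is open.
-/

open MeasureTheory Set Filter Topology
open scoped Interval

theorem MeasureTheory.LocallyIntegrable.intervalIntegrable {E : Type*} [NormedAddCommGroup E]
    {f : ℝ → E} (hf : LocallyIntegrable f volume) (a b : ℝ) :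
    IntervalIntegrable f volume a b :=
  intervalIntegrable_iff.2 <| (hf.integrableOn_isCompact isCompact_uIcc).mono_set uIoc_subset_uIcc

theorem MeasureTheory.LocallyIntegrable.exists_pos_integral_abs_le {c : ℝ → ℝ}
    (hc : LocallyIntegrable c volume) (s : ℝ) {η : ℝ} (hη : 0 < η) :
    ∃ δ > 0, ∫ t in s - δ..s + δ, |c t| ≤ η := by
  have hci (a b : ℝ) := (hc.intervalIntegrable a b).abs
  obtain ⟨ε, hε, hΦ⟩ := Metric.continuousAt_iff.1
    ((intervalIntegral.continuous_primitive hci s).continuousAt (x := s)) (η / 2) (by positivity)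
  have hhalf (x : ℝ) (hx : |x - s| < ε) : ‖∫ t in s..x, |c t|‖ < η / 2 := by
    simpa [Real.dist_eq] using hΦ (x := x) (by rwa [Real.dist_eq])
  refine ⟨ε / 2, by positivity, ?_⟩
  have h₁ := hhalf (s + ε / 2) (by rw [add_sub_cancel_left, abs_of_pos (by positivity)]; linarith)
  have h₂ := hhalf (s - ε / 2)
    (by rw [sub_sub_cancel_left, abs_neg, abs_of_pos (by positivity)]; linarith)
  rw [Real.norm_eq_abs, abs_lt] at h₁ h₂
  rw [← intervalIntegral.integral_interval_sub_left (hci s _) (hci s _)]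
  linarith [h₁.2, h₂.1]

section Gronwall

variable {F F' c : ℝ → ℝ}

theorem eventually_eq_zero_of_abs_deriv_le_mul (hF : ∀ x, HasDerivAt F (F' x) x)
    (hF' : Continuous F') (hF₀ : ∀ x, 0 ≤ F x) (hc : LocallyIntegrable c volume)
    (hbound : ∀ x, |F' x| ≤ |c x| * F x) {s : ℝ} (hs : F s = 0) :
    ∀ᶠ x in 𝓝 s, F x = 0 := by
  obtain ⟨δ, hδ, hsmall⟩ := hc.exists_pos_integral_abs_le s one_half_pos
  set I := Icc (s - δ) (s + δ)
  have hsI : s ∈ I := ⟨by linarith, by linarith⟩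
  obtain ⟨z, hzI, hz⟩ := isCompact_Icc.exists_isMaxOn ⟨s, hsI⟩
    (continuous_iff_continuousAt.2 fun x => (hF x).continuousAt).continuousOn
  have hle (x : ℝ) (hx : x ∈ I) : F x ≤ F z / 2 := by
    have hsub : Ι s x ⊆ I := uIoc_subset_uIcc.trans (uIcc_subset_Icc hsI hx)
    calc F x = ∫ t in s..x, F' t := by
          rw [intervalIntegral.integral_eq_sub_of_hasDerivAt (fun t _ => hF t)
            (hF'.intervalIntegrable s x), hs, sub_zero]
      _ ≤ ∫ t in Ι s x, ‖F' t‖ :=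
          (Real.le_norm_self _).trans intervalIntegral.norm_integral_le_integral_norm_uIoc
      _ ≤ ∫ t in Ι s x, |c t| * F z :=
          setIntegral_mono_on (hF'.intervalIntegrable s x).def'.norm
            ((hc.intervalIntegrable s x).abs.def'.mul_const _) measurableSet_uIoc fun t ht =>
              (hbound t).trans (mul_le_mul_of_nonneg_left (hz (hsub ht)) (abs_nonneg _))
      _ ≤ ∫ t in I, |c t| * F z :=
          setIntegral_mono_set ((hc.integrableOn_isCompact isCompact_Icc).abs.mul_const _)
            (ae_of_all _ fun t => mul_nonneg (abs_nonneg _) (hF₀ z)) hsub.eventuallyLE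
      _ = (∫ t in s - δ..s + δ, |c t|) * F z := by
          rw [integral_mul_const, intervalIntegral.integral_of_le (by linarith),
            integral_Icc_eq_integral_Ioc]
      _ ≤ 1 / 2 * F z := mul_le_mul_of_nonneg_right hsmall (hF₀ z)
      _ = F z / 2 := by ring
  have hz₀ : F z ≤ 0 := by linarith [hle z hzI]
  filter_upwards [Icc_mem_nhds (by linarith : s - δ < s) (by linarith : s < s + δ)] with x hx
  exact le_antisymm ((hle x hx).trans (by linarith)) (hF₀ x)

theorem eq_zero_of_abs_deriv_le_mul (hF : ∀ x, HasDerivAt F (F' x) x)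
    (hF' : Continuous F') (hF₀ : ∀ x, 0 ≤ F x) (hc : LocallyIntegrable c volume)
    (hbound : ∀ x, |F' x| ≤ |c x| * F x) {s : ℝ} (hs : F s = 0) : F = 0 := by
  have hclopen : IsClopen {x | F x = 0} :=
    ⟨isClosed_eq (continuous_iff_continuousAt.2 fun x => (hF x).continuousAt) continuous_const,
      isOpen_iff_mem_nhds.2 fun _ hy =>
        eventually_eq_zero_of_abs_deriv_le_mul hF hF' hF₀ hc hbound hy⟩
  funext x
  exact (hclopen.eq_univ ⟨s, hs⟩ ▸ mem_univ x : x ∈ {x | F x = 0})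

end Gronwall

theorem eq_zero_of_deriv_deriv_eq_mul {u q : ℝ → ℝ} (hu : ContDiff ℝ 2 u)
    (hq : LocallyIntegrable q volume) (h : ∀ x, deriv (deriv u) x = q x * u x) {x₀ : ℝ}
    (h₀ : u x₀ = 0) (h₁ : deriv u x₀ = 0) : u = 0 := by
  have hu₁ := hu.differentiable (by norm_num)
  have hu₂ := hu.differentiable_deriv_two
  have hu₃ : Continuous (deriv (deriv u)) := (hu.deriv' (n := 1)).continuous_deriv_one
  have hF (x : ℝ) : HasDerivAt (fun x => u x ^ 2 + deriv u x ^ 2)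
      (2 * u x * deriv u x + 2 * deriv u x * deriv (deriv u) x) x := by
    refine (((hu₁ x).hasDerivAt.pow 2).add ((hu₂ x).hasDerivAt.pow 2)).congr_deriv ?_
    push_cast
    ring
  have hF' : Continuous fun x => 2 * u x * deriv u x + 2 * deriv u x * deriv (deriv u) x := by
    have := hu₁.continuous
    have := hu₂.continuous
    fun_prop
  have hbound (x : ℝ) : |2 * u x * deriv u x + 2 * deriv u x * deriv (deriv u) x|
      ≤ |1 + q x| * (u x ^ 2 + deriv u x ^ 2) := by
    rw [h x, show 2 * u x * deriv u x + 2 * deriv u x * (q x * u x)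
      = (1 + q x) * (2 * u x * deriv u x) by ring, abs_mul]
    refine mul_le_mul_of_nonneg_left (abs_le.2 ⟨?_, two_mul_le_add_sq _ _⟩) (abs_nonneg _)
    nlinarith [sq_nonneg (u x + deriv u x)]
  have hF₀ := eq_zero_of_abs_deriv_le_mul hF hF' (fun x => by positivity)
    ((locallyIntegrable_const 1).add hq) hbound (s := x₀) (by simp [h₀, h₁])
  funext x
  have hx := congrFun hF₀ x
  simp only [Pi.zero_apply] at hx ⊢
  nlinarith [sq_nonneg (u x), sq_nonneg (deriv u x)]

theorem eq_zero_of_integrable_of_hasDerivAt_zero {w : ℝ → ℝ} (hw : Integrable w volume)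
    (hd : ∀ x, HasDerivAt w 0 x) : w = 0 := by
  have hconst : w = fun _ => w 0 :=
    funext fun x => is_const_of_deriv_eq_zero (fun y => (hd y).differentiableAt)
      (fun y => (hd y).deriv) x 0
  rw [hconst] at hw ⊢
  rcases integrable_const_iff.1 hw with h | h
  · exact funext fun _ => h
  · exact absurd h.measure_univ_lt_top (by simp)

noncomputable def wronskian (f g : ℝ → ℝ) (x : ℝ) : ℝ := f x * deriv g x - deriv f x * g x

section Wronskian

variable {f g q : ℝ → ℝ}

theorem hasDerivAt_wronskian (hf : ContDiff ℝ 2 f) (hg : ContDiff ℝ 2 g)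
    (hfq : ∀ x, deriv (deriv f) x = q x * f x) (hgq : ∀ x, deriv (deriv g) x = q x * g x)
    (x : ℝ) : HasDerivAt (wronskian f g) 0 x := by
  have hf₁ := (hf.differentiable (by norm_num) x).hasDerivAt
  have hg₁ := (hg.differentiable (by norm_num) x).hasDerivAt
  refine ((hf₁.mul (hg.differentiable_deriv_two x).hasDerivAt).sub
    ((hf.differentiable_deriv_two x).hasDerivAt.mul hg₁)).congr_deriv ?_
  rw [hfq, hgq]
  ring

theorem integrable_wronskian (hf : MemLp f 2 volume) (hf' : MemLp (deriv f) 2 volume)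
    (hg : MemLp g 2 volume) (hg' : MemLp (deriv g) 2 volume) :
    Integrable (wronskian f g) volume :=
  (hf.integrable_mul hg').sub (hf'.integrable_mul hg)

theorem eq_const_mul_of_wronskian_eq_zero (hf : ContDiff ℝ 2 f) (hg : ContDiff ℝ 2 g)
    (hq : LocallyIntegrable q volume) (hfq : ∀ x, deriv (deriv f) x = q x * f x)
    (hgq : ∀ x, deriv (deriv g) x = q x * g x) {x₀ : ℝ} (hW : wronskian f g x₀ = 0)
    (hg₀ : g x₀ ≠ 0) : f = fun x => f x₀ / g x₀ * g x := by
  unfold wronskian at hW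
  set a := f x₀ / g x₀
  have hderiv : deriv (fun x => f x - a * g x) = fun x => deriv f x - a * deriv g x :=
    funext fun x => ((hf.differentiable (by norm_num) x).hasDerivAt.sub
      ((hg.differentiable (by norm_num) x).hasDerivAt.const_mul a)).deriv
  have hderiv₂ : deriv (deriv fun x => f x - a * g x) =
      fun x => deriv (deriv f) x - a * deriv (deriv g) x := by
    rw [hderiv]
    exact funext fun x => ((hf.differentiable_deriv_two x).hasDerivAt.sub
      ((hg.differentiable_deriv_two x).hasDerivAt.const_mul a)).deriv
  have hu := eq_zero_of_deriv_deriv_eq_mul (u := fun x => f x - a * g x)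
    (hf.sub (contDiff_const.mul hg)) hq (fun x => by simp only [hderiv₂, hfq, hgq]; ring)
    (x₀ := x₀) (by simp only [a]; field_simp; ring)
    (by simp only [hderiv, a]; field_simp; linear_combination -hW)
  exact funext fun x => sub_eq_zero.1 (congrFun hu x)

end Wronskian

/-- Non-degeneracy theorem in dimension one: two real `H¹` eigenfunctions of
`-d²/dx² + v` with the same eigenvalue `E` are linearly dependent. -/
theorem nondegeneracy_dim_one (v ψ φ : ℝ → ℝ) (E : ℝ)
    (hv : ∃ v₁ v₂ : ℝ → ℝ, v = v₁ + v₂ ∧ MemLp v₁ 1 volume ∧ MemLp v₂ ⊤ volume)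
    (hψC2 : ContDiff ℝ 2 ψ) (hφC2 : ContDiff ℝ 2 φ)
    (hψL2 : MemLp ψ 2 volume) (hψ'L2 : MemLp (deriv ψ) 2 volume)
    (hφL2 : MemLp φ 2 volume) (hφ'L2 : MemLp (deriv φ) 2 volume)
    (hψeq : ∀ x, -deriv (deriv ψ) x + v x * ψ x = E * ψ x)
    (hφeq : ∀ x, -deriv (deriv φ) x + v x * φ x = E * φ x)
    (hφ0 : φ ≠ 0) :
    ∃ a : ℝ, ψ = fun x => a * φ x := by
  have hq : LocallyIntegrable (fun x => v x - E) volume := by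
    obtain ⟨v₁, v₂, rfl, hv₁, hv₂⟩ := hv
    exact ((hv₁.locallyIntegrable le_rfl).add (hv₂.locallyIntegrable le_top)).sub
      (locallyIntegrable_const E)
  have hψ (x : ℝ) : deriv (deriv ψ) x = (v x - E) * ψ x := by linear_combination -hψeq x
  have hφ (x : ℝ) : deriv (deriv φ) x = (v x - E) * φ x := by linear_combination -hφeq x
  have hW : wronskian ψ φ = 0 :=
    eq_zero_of_integrable_of_hasDerivAt_zero (integrable_wronskian hψL2 hψ'L2 hφL2 hφ'L2)
      (hasDerivAt_wronskian hψC2 hφC2 hψ hφ)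
  obtain ⟨x₀, hx₀⟩ := Function.ne_iff.1 hφ0
  exact ⟨_, eq_const_mul_of_wronskian_eq_zero hψC2 hφC2 hq hψ hφ (congrFun hW x₀) hx₀⟩
end

section
/- Suppose that for every v in a normed space and every k, the one-sided directional derivative satisfies δ⁺G^{(k)}(v)(−u) = −δ⁺G^{(M+m−k)}(v)(u) for all directions u, where m ≤ k ≤ M. If v is a local maximizer of G^{(k)} (so δ⁺G^{(k)}(v)(u) ≤ 0 for all u) and additionally δ⁺G^{(ℓ)}(v) ≤ δ⁺G^{(ℓ')}(v) pointwise whenever ℓ ≤ ℓ', and k ≥ (M+m)/2, then δ⁺G^{(k)}(v)(u) = 0 for all u; i.e., G^{(k)} is Gateaux differentiable at v with zero differential. -/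
open Filter

theorem eq_zero_of_neg_eq_neg_of_le_of_nonpos {X : Type*} [Neg X] {f g : X → ℝ}
    (hneg : ∀ u, f (-u) = -g u) (hle : ∀ u, g u ≤ f u) (hf : ∀ u, f u ≤ 0) (u : X) :
    f u = 0 := by
  have hg : 0 ≤ g u := by linarith [hneg u, hf (-u)]
  linarith [hle u, hf u]

theorem local_max_symmetry_zero_derivative_general {X : Type*} [NormedAddCommGroup X]
    (D : ℕ → X → X → ℝ) (v : X) (m k M : ℕ)
    (hkM : k ≤ M)
    (hrefl : ∀ u : X, D k v (-u) = -(D (M + m - k) v u))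
    (hmax : ∀ u : X, D k v u ≤ 0)
    (hmono : ∀ ℓ ℓ' : ℕ, m ≤ ℓ → ℓ ≤ ℓ' → ℓ' ≤ M → ∀ u : X, D ℓ v u ≤ D ℓ' v u)
    (hk2 : (M + m : ℝ) ≤ 2 * k) :
    ∀ u : X, D k v u = 0 := by
  have hk2' : M + m ≤ 2 * k := by exact_mod_cast hk2
  exact eq_zero_of_neg_eq_neg_of_le_of_nonpos hrefl
    (hmono (M + m - k) k (by omega) (by omega) hkM) hmax

/-- Symmetry argument at a local maximizer: if the one-sided directional derivatives
`D^{(j)}` of the family `G^{(j)}` satisfy the reflection identity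
`D^{(k)}(v)(−u) = −D^{(M+m−k)}(v)(u)`, are monotone in the index `j ∈ [m, M]`,
`D^{(k)}(v) ≤ 0` (local maximality), and `k ≥ (M+m)/2`, then `D^{(k)}(v)(u) = 0` in
every direction `u`: `G^{(k)}` is Gateaux differentiable at `v` with zero
differential. -/
theorem local_max_symmetry_zero_derivative {X : Type*} [NormedAddCommGroup X]
    [NormedSpace ℝ X]
    (G : ℕ → X → ℝ) (D : ℕ → X → X → ℝ) (v : X) (m k M : ℕ)
    (hmk : m ≤ k) (hkM : k ≤ M)
    (hD : ∀ (j : ℕ) (u : X),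
        Tendsto (fun t : ℝ => (G j (v + t • u) - G j v) / t)
          (nhdsWithin 0 (Set.Ioi 0)) (nhds (D j v u)))
    (hrefl : ∀ u : X, D k v (-u) = -(D (M + m - k) v u))
    (hmax : ∀ u : X, D k v u ≤ 0)
    (hmono : ∀ ℓ ℓ' : ℕ, m ≤ ℓ → ℓ ≤ ℓ' → ℓ' ≤ M → ∀ u : X, D ℓ v u ≤ D ℓ' v u)
    (hk2 : (M + m : ℝ) ≤ 2 * k) :
    ∀ u : X, D k v u = 0 :=
  local_max_symmetry_zero_derivative_general D v m k M hkM hrefl hmax hmono hk2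
end
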